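/- Fix $t > 0$ and $s \in (0,t]$. For every continuous $\phi : [0,t]\to\mathbb{R}$, with $A_u(\phi) = \int_0^u e^{2\phi_v}dv$ and $Z_u(\phi) = e^{-\phi_u}A_u(\phi)$, it holds that $\phi_s = -\log\{Z_s(\phi)\int_s^t \frac{du}{(Z_u(\phi))^2} + \frac{Z_s(\phi)}{Z_t(\phi)}e^{-\phi_t}\}$. -/

import Mathlib

/-- The exponential additive functional. -/
noncomputable def A (φ : ℝ → ℝ) (s : ℝ) : ℝ := ∫ u in (0:ℝ)..s, Real.exp (2 * φ u)

/-- The transformation `Z`. -/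
noncomputable def Z (φ : ℝ → ℝ) (s : ℝ) : ℝ := Real.exp (-φ s) * A φ s

theorem stmt17 (t : ℝ) (ht : 0 < t) (φ : ℝ → ℝ)
    (hφ : ContinuousOn φ (Set.Icc 0 t)) :
    ∀ s ∈ Set.Ioc (0:ℝ) t,
      φ s = -Real.log
        (Z φ s * (∫ u in s..t, 1 / (Z φ u) ^ 2) + Z φ s / Z φ t * Real.exp (-φ t)) := by
  intro s hs
  obtain ⟨hs0, hst⟩ := hs
  set g : ℝ → ℝ := fun u => Real.exp (2 * φ u) with hg_def
  have hg : ContinuousOn g (Set.Icc 0 t) :=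
    Real.continuous_exp.comp_continuousOn (continuousOn_const.mul hφ)
  have hg_int : ∀ a b, a ∈ Set.Icc (0:ℝ) t → b ∈ Set.Icc (0:ℝ) t →
      IntervalIntegrable g MeasureTheory.volume a b := by
    intro a b ha hb
    exact (hg.mono (Set.uIcc_subset_Icc ha hb)).intervalIntegrable
  -- positivity of A on (0, t]
  have hA_pos : ∀ u ∈ Set.Ioc (0:ℝ) t, 0 < A φ u := by
    intro u hu
    apply intervalIntegral.intervalIntegral_pos_of_pos_on
      (hg_int 0 u (by simp [le_of_lt ht]) ⟨le_of_lt hu.1, hu.2⟩)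
    · intro x _; exact Real.exp_pos _
    · exact hu.1
  have hAs : 0 < A φ s := hA_pos s ⟨hs0, hst⟩
  have hAt : 0 < A φ t := hA_pos t ⟨ht, le_refl t⟩
  -- derivative of A on the interior
  have hA_deriv : ∀ u ∈ Set.Ioo s t, HasDerivAt (A φ) (g u) u := by
    intro u hu
    have hu' : u ∈ Set.Ioo (0:ℝ) t := ⟨lt_trans hs0 hu.1, hu.2⟩
    have hmem : Set.Ioo (0:ℝ) t ∈ nhds u := (isOpen_Ioo).mem_nhds hu'
    apply intervalIntegral.integral_hasDerivAt_right
      (hg_int 0 u (by simp [le_of_lt ht]) ⟨le_of_lt hu'.1, le_of_lt hu'.2⟩)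
    · exact ContinuousOn.stronglyMeasurableAtFilter isOpen_Ioo
        (hg.mono Set.Ioo_subset_Icc_self) u hu'
    · exact (hg.mono Set.Ioo_subset_Icc_self).continuousAt hmem
  -- A continuous on [s, t]
  have hA_cont : ContinuousOn (A φ) (Set.Icc s t) := by
    have := intervalIntegral.continuousOn_primitive_interval
      (f := g) (μ := MeasureTheory.volume) (a := 0) (b := t)
      ((hg.mono (by simp [Set.uIcc_of_le (le_of_lt ht)])).integrableOn_uIcc)
    rw [Set.uIcc_of_le (le_of_lt ht)] at this
    exact (this.mono (Set.Icc_subset_Icc (le_of_lt hs0) le_rfl))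
  -- A positive hence nonzero on [s,t]
  have hA_ne : ∀ u ∈ Set.Icc s t, A φ u ≠ 0 := by
    intro u hu
    exact ne_of_gt (hA_pos u ⟨lt_of_lt_of_le hs0 hu.1, hu.2⟩)
  -- F = fun u => -(A φ u)⁻¹ ; F' = g / A^2
  set F : ℝ → ℝ := fun u => -(A φ u)⁻¹ with hF_def
  have hF_cont : ContinuousOn F (Set.Icc s t) := (hA_cont.inv₀ hA_ne).neg
  have hF_deriv : ∀ u ∈ Set.Ioo s t, HasDerivAt F (g u / (A φ u) ^ 2) u := by
    intro u hu
    have h1 := ((hA_deriv u hu).inv (hA_ne u (Set.Ioo_subset_Icc_self hu))).neg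
    rw [show g u / A φ u ^ 2 = -(-g u / A φ u ^ 2) by ring]
    exact h1
  have hf'_cont : ContinuousOn (fun u => g u / (A φ u) ^ 2) (Set.Icc s t) := by
    apply ContinuousOn.div (hg.mono (Set.Icc_subset_Icc (le_of_lt hs0) le_rfl)) (hA_cont.pow 2)
    intro u hu
    exact pow_ne_zero 2 (hA_ne u hu)
  have hf'_int : IntervalIntegrable (fun u => g u / (A φ u) ^ 2) MeasureTheory.volume s t := by
    rw [intervalIntegrable_iff_integrableOn_Icc_of_le hst]
    exact hf'_cont.integrableOn_Icc
  have hFTC : ∫ u in s..t, g u / (A φ u) ^ 2 = F t - F s := by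
    apply intervalIntegral.integral_eq_sub_of_hasDeriv_right_of_le hst hF_cont
      (fun u hu => (hF_deriv u hu).hasDerivWithinAt) hf'_int
  -- rewrite the integrand
  have hintegrand : ∀ u, (1:ℝ) / (Z φ u) ^ 2 = g u / (A φ u) ^ 2 := by
    intro u
    have h2 : (Z φ u) ^ 2 = (A φ u) ^ 2 / g u := by
      simp only [Z, hg_def, pow_two, two_mul, Real.exp_add, Real.exp_neg, mul_inv,
        div_eq_mul_inv]
      ring
    rw [h2, one_div_div]
  have hint : (∫ u in s..t, 1 / (Z φ u) ^ 2) = (A φ s)⁻¹ - (A φ t)⁻¹ := by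
    rw [intervalIntegral.integral_congr (fun u _ => hintegrand u), hFTC]
    simp [hF_def]
    ring
  -- final algebra
  have hZt_ne : Z φ t ≠ 0 := by
    simp only [Z]
    exact mul_ne_zero (Real.exp_ne_zero _) (ne_of_gt hAt)
  have key : Z φ s * ((A φ s)⁻¹ - (A φ t)⁻¹) + Z φ s / Z φ t * Real.exp (-φ t)
      = Real.exp (-φ s) := by
    simp only [Z]
    field_simp
    ring
  rw [hint, key, Real.log_exp, neg_neg]
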